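/- arXiv:1002.2180 — 2 statements merged into one kernel-verified Lean document; each statement's English description precedes it below -/
import Mathlib

section
/- Let A be a C*-algebra, let b be a positive element of A, and let δ > 0. If c is a positive element of A lying in the closure of the set {(b − δ)_+ · y · (b − δ)_+ : y ∈ A} (the hereditary subalgebra of A generated by (b − δ)_+), then c ≤ (‖c‖/δ) b. -/
/-- An element of a star ring is positive if it is of the form `y* y`.
(In a C*-algebra this characterizes the positive elements.)  In particular,
for self-adjoint `x, y` the canonical order satisfies `x ≤ y ↔ IsPositive (y - x)`. -/
def IsPositive {R : Type*} [NonUnitalSemiring R] [StarRing R] (a : R) : Prop :=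
  ∃ y : R, a = star y * y

/-- The "δ-cutdown" `(b - δ)₊` of an element `b`, obtained by applying the
non-unital continuous functional calculus with the function `t ↦ max (t - δ) 0`. -/
noncomputable def cutdown {A : Type*} [NonUnitalCStarAlgebra A] (b : A) (δ : ℝ) : A :=
  cfcₙ (fun t : ℝ => max (t - δ) 0) b

/-!
Let `d = g(b)` with `g t = min (t / δ) 1`. Since `g = 1` where `t ↦ max (t - δ) 0` is nonzero,
`d` is a two-sided unit for `(b - δ)₊`, hence `d c d = c` on the closure of `(b - δ)₊ A (b - δ)₊`.
On the other hand `δ g(t)² ≤ t` for `t ≥ 0`, so `δ d² ≤ b`. Therefore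
`c = d c d ≤ ‖c‖ d² ≤ (‖c‖ / δ) b`, the order being the spectral order of `A`.
-/

theorem mul_mul_eq_self_of_mem_closure {R : Type*} [Semigroup R] [TopologicalSpace R]
    [ContinuousMul R] [T2Space R] {d e x : R} (hde : d * e = e) (hed : e * d = e)
    (hx : x ∈ closure {z : R | ∃ y, z = e * y * e}) :
    d * x * d = x := by
  refine closure_minimal ?_ (isClosed_eq (f := fun z => d * z * d) (by fun_prop) continuous_id) hx
  rintro _ ⟨y, rfl⟩
  calc d * (e * y * e) * d = (d * e) * y * (e * d) := by simp only [mul_assoc]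
    _ = e * y * e := by rw [hde, hed]

lemma min_div_one_mul_max_sub_zero {δ : ℝ} (hδ : 0 < δ) (t : ℝ) :
    min (t / δ) 1 * max (t - δ) 0 = max (t - δ) 0 := by
  rcases le_or_gt t δ with h | h
  · simp [max_eq_right (sub_nonpos.mpr h)]
  · rw [min_eq_right ((one_le_div hδ).mpr h.le), one_mul]

lemma mul_min_div_one_sq_le {δ t : ℝ} (hδ : 0 < δ) (ht : 0 ≤ t) :
    δ * (min (t / δ) 1 * min (t / δ) 1) ≤ t := by
  rcases le_or_gt t δ with h | h
  · rw [min_eq_left ((div_le_one hδ).mpr h)]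
    rw [show δ * (t / δ * (t / δ)) = t * (t / δ) by field_simp]
    exact mul_le_of_le_one_right ht ((div_le_one hδ).mpr h)
  · rw [min_eq_right ((one_le_div hδ).mpr h.le), mul_one, mul_one]
    exact h.le

section CStarAlgebra

variable {A : Type*} [NonUnitalCStarAlgebra A]

noncomputable def cutdownUnit (b : A) (δ : ℝ) : A :=
  cfcₙ (fun t : ℝ => min (t / δ) 1) b

lemma cutdownUnit_mul_cutdown (b : A) {δ : ℝ} (hδ : 0 < δ) :
    cutdownUnit b δ * cutdown b δ = cutdown b δ := by
  rw [cutdownUnit, cutdown, ← cfcₙ_mul _ _ b (hf0 := by simp) (hg0 := by simp [hδ.le])]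
  simp only [min_div_one_mul_max_sub_zero hδ]

lemma cutdown_mul_cutdownUnit (b : A) {δ : ℝ} (hδ : 0 < δ) :
    cutdown b δ * cutdownUnit b δ = cutdown b δ :=
  (cfcₙ_commute_cfcₙ _ _ b).eq.symm.trans (cutdownUnit_mul_cutdown b hδ)

lemma smul_cutdownUnit_mul_self_le [PartialOrder A] [StarOrderedRing A] {b : A} (hb : 0 ≤ b)
    {δ : ℝ} (hδ : 0 < δ) :
    δ • (cutdownUnit b δ * cutdownUnit b δ) ≤ b := by
  rw [cutdownUnit, ← cfcₙ_mul _ _ b (hf0 := by simp) (hg0 := by simp),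
    ← cfcₙ_const_mul _ _ b (h0 := by simp)]
  conv_rhs => rw [← cfcₙ_id' ℝ b]
  exact cfcₙ_mono (fun t ht => mul_min_div_one_sq_le hδ (quasispectrum_nonneg_of_nonneg b hb t ht))
    (hf0 := by simp)

lemma isPositive_iff_nonneg [PartialOrder A] [StarOrderedRing A] {a : A} :
    IsPositive a ↔ 0 ≤ a :=
  CStarAlgebra.nonneg_iff_eq_star_mul_self.symm

end CStarAlgebra

/-- If `b` is a positive element of a C*-algebra `A`, `δ > 0`, and `c` is a
positive element of the hereditary subalgebra generated by `(b - δ)₊`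
(the closure of `(b - δ)₊ A (b - δ)₊`), then `c ≤ (‖c‖ / δ) b`, i.e.
`(‖c‖ / δ) • b - c` is positive. -/
theorem le_smul_of_mem_hereditary
    {A : Type*} [NonUnitalCStarAlgebra A] (b : A) (hb : IsPositive b)
    (δ : ℝ) (hδ : 0 < δ) (c : A) (hc : IsPositive c)
    (hmem : c ∈ closure {x : A | ∃ y : A, x = cutdown b δ * y * cutdown b δ}) :
    IsPositive ((‖c‖ / δ) • b - c) := by
  let _ := CStarAlgebra.spectralOrder A
  have _ := CStarAlgebra.spectralOrderedRing A
  rw [isPositive_iff_nonneg] at hb hc ⊢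
  set d := cutdownUnit b δ
  have hdcd : d * c * d = c := mul_mul_eq_self_of_mem_closure
    (cutdownUnit_mul_cutdown b hδ) (cutdown_mul_cutdownUnit b hδ) hmem
  have hd : IsSelfAdjoint d := IsSelfAdjoint.cfcₙ
  rw [sub_nonneg]
  calc c = star d * c * d := by rw [hd.star_eq, hdcd]
    _ ≤ ‖c‖ • (star d * d) := CStarAlgebra.star_left_conjugate_le_norm_smul
    _ = (‖c‖ / δ) • (δ • (d * d)) := by
      rw [hd.star_eq, smul_smul, div_mul_cancel₀ _ hδ.ne']
    _ ≤ (‖c‖ / δ) • b := by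
      gcongr
      exact smul_cutdownUnit_mul_self_le hb hδ
end

section
/- Let C and D be C*-algebras, let φ : C → D be a c.p.c. order zero map, and let I be a closed two-sided ideal of C such that φ vanishes on I. Then for all positive elements c, c' of C with c·c' ∈ I, one has φ(c)·φ(c') = 0. (This is the quotient-free form of: the map C/I → D induced by φ is again c.p.c. of order zero.) -/
/-- A linear map between C*-algebras is completely positive and contractive (c.p.c.)
if it is contractive and its entrywise application to `k × k` matrices preserves
positivity for every `k`. -/
def IsCPC {A B : Type*} [NonUnitalCStarAlgebra A] [NonUnitalCStarAlgebra B]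
    (f : A →ₗ[ℂ] B) : Prop :=
  (∀ a : A, ‖f a‖ ≤ ‖a‖) ∧
  ∀ (k : ℕ) (x : Matrix (Fin k) (Fin k) A), IsPositive x → IsPositive (x.map f)

/-- A map between C*-algebras has order zero if it preserves orthogonality of
positive elements. -/
def IsOrderZero {A B : Type*} [NonUnitalCStarAlgebra A] [NonUnitalCStarAlgebra B]
    (f : A →ₗ[ℂ] B) : Prop :=
  ∀ a b : A, IsPositive a → IsPositive b → a * b = 0 → f a * f b = 0

/-! ## Auxiliary material -/

open Filter Topology

section RealLemmas

/-- The elementary bound `s (1-s)^m ≤ 1/(m+1)` on `[0,1]`. -/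
lemma aux_s_one_sub_pow_le {s : ℝ} (h0 : 0 ≤ s) (h1 : s ≤ 1) (m : ℕ) :
    s * (1 - s) ^ m ≤ 1 / (m + 1) := by
  have hP : (0:ℝ) ≤ (1 - s) ^ m := pow_nonneg (by linarith) m
  have hber : 1 + (m:ℝ) * s ≤ (1 + s) ^ m := one_add_mul_le_pow (by linarith) m
  have key : (1 - s) ^ m * (1 + (m:ℝ) * s) ≤ 1 := by
    calc (1 - s) ^ m * (1 + (m:ℝ) * s) ≤ (1 - s) ^ m * (1 + s) ^ m :=
          mul_le_mul_of_nonneg_left hber hP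
    _ = ((1 - s) * (1 + s)) ^ m := (mul_pow _ _ _).symm
    _ = (1 - s ^ 2) ^ m := by ring_nf
    _ ≤ 1 := pow_le_one₀ (by nlinarith) (by nlinarith)
  rw [le_div_iff₀ (by positivity : (0:ℝ) < (m:ℝ) + 1)]
  have h2 : s * ((m:ℝ) + 1) ≤ 1 + (m:ℝ) * s := by nlinarith
  calc s * (1 - s) ^ m * ((m:ℝ) + 1) = (s * ((m:ℝ) + 1)) * (1 - s) ^ m := by ring
  _ ≤ (1 + (m:ℝ) * s) * (1 - s) ^ m := mul_le_mul_of_nonneg_right h2 hP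
  _ ≤ 1 := by rw [mul_comm]; exact key

end RealLemmas

section Aux

variable {C : Type*} [NonUnitalCStarAlgebra C]

/-- An order-free formulation of positivity: selfadjoint with nonnegative quasispectrum. -/
def IsPos (a : C) : Prop := IsSelfAdjoint a ∧ ∀ t ∈ quasispectrum ℝ a, 0 ≤ t

lemma isPos_star_mul_self (y : C) : IsPos (star y * y) := by
  refine ⟨IsSelfAdjoint.star_mul_self y, fun t ht => ?_⟩
  rw [Unitization.quasispectrum_eq_spectrum_inr' ℝ ℂ, Unitization.inr_mul,
    Unitization.inr_star] at ht
  exact spectrum_star_mul_self_nonneg t ht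

lemma isPos_mul_star_self (y : C) : IsPos (y * star y) := by
  simpa using isPos_star_mul_self (star y)

lemma IsPositive.isPos {a : C} (ha : IsPositive a) : IsPos a := by
  obtain ⟨y, rfl⟩ := ha; exact isPos_star_mul_self y

lemma IsPos.isPositive {a : C} (ha : IsPos a) : IsPositive a := by
  refine ⟨cfcₙ Real.sqrt a, ?_⟩
  have hy : IsSelfAdjoint (cfcₙ Real.sqrt a) := cfcₙ_predicate Real.sqrt a
  rw [hy.star_eq, ← cfcₙ_mul Real.sqrt Real.sqrt a
    (Real.continuous_sqrt.continuousOn) Real.sqrt_zero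
    (Real.continuous_sqrt.continuousOn) Real.sqrt_zero]
  have h1 : cfcₙ (fun t : ℝ => Real.sqrt t * Real.sqrt t) a = cfcₙ (fun t : ℝ => t) a :=
    cfcₙ_congr fun t ht => Real.mul_self_sqrt (ha.2 t ht)
  rw [h1, cfcₙ_id' ℝ a ha.1]

lemma IsPos.add {a b : C} (ha : IsPos a) (hb : IsPos b) : IsPos (a + b) := by
  refine ⟨ha.1.add hb.1, fun t ht => ?_⟩
  rw [Unitization.quasispectrum_eq_spectrum_inr' ℝ ℂ, Unitization.inr_add] at ht
  have hsa : IsSelfAdjoint (a : Unitization ℂ C) := by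
    rw [Unitization.isSelfAdjoint_inr]; exact ha.1
  have hsb : IsSelfAdjoint (b : Unitization ℂ C) := by
    rw [Unitization.isSelfAdjoint_inr]; exact hb.1
  have hra : SpectrumRestricts (a : Unitization ℂ C) ContinuousMap.realToNNReal := by
    rw [SpectrumRestricts.nnreal_iff]
    intro x hx
    exact ha.2 x (by rwa [Unitization.quasispectrum_eq_spectrum_inr' ℝ ℂ])
  have hrb : SpectrumRestricts (b : Unitization ℂ C) ContinuousMap.realToNNReal := by
    rw [SpectrumRestricts.nnreal_iff]
    intro x hx
    exact hb.2 x (by rwa [Unitization.quasispectrum_eq_spectrum_inr' ℝ ℂ])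
  have hadd := SpectrumRestricts.nnreal_add hsa hsb hra hrb
  rw [SpectrumRestricts.nnreal_iff] at hadd
  exact hadd t ht

lemma IsPos.le_norm {a : C} (_ : IsPos a) {t : ℝ} (ht : t ∈ quasispectrum ℝ a) : t ≤ ‖a‖ := by
  rw [Unitization.quasispectrum_eq_spectrum_inr' ℝ ℂ] at ht
  calc t ≤ ‖t‖ := Real.le_norm_self t
  _ ≤ ‖(a : Unitization ℂ C)‖ := spectrum.norm_le_norm_of_mem ht
  _ = ‖a‖ := Unitization.norm_inr a

/-! ### The approximate-unit iteration -/

/-- Polynomial iteration: `auF R n t = 1 - (1 - t/R)^n`. -/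
noncomputable def auF (R : ℝ) : ℕ → ℝ → ℝ
  | 0 => fun _ => 0
  | n + 1 => fun t => auF R n t + R⁻¹ * (t - t * auF R n t)

lemma auF_cont (R : ℝ) (n : ℕ) : Continuous (auF R n) := by
  induction n with
  | zero => exact continuous_const
  | succ n ih => exact ih.add (continuous_const.mul (continuous_id.sub (continuous_id.mul ih)))

lemma auF_zero (R : ℝ) (n : ℕ) : auF R n 0 = 0 := by
  induction n with
  | zero => rfl
  | succ n ih => simp [auF, ih]

lemma auF_closed (R : ℝ) (n : ℕ) (t : ℝ) : 1 - auF R n t = (1 - t / R) ^ n := by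
  induction n with
  | zero => simp [auF]
  | succ n ih =>
    have h : 1 - auF R (n+1) t = (1 - auF R n t) * (1 - t / R) := by
      show 1 - (auF R n t + R⁻¹ * (t - t * auF R n t)) = _
      ring
    rw [h, ih, ← pow_succ]

lemma auF_cfc_succ (R : ℝ) (n : ℕ) {y : C} (hy : IsSelfAdjoint y) :
    cfcₙ (auF R (n+1)) y = cfcₙ (auF R n) y + R⁻¹ • (y - y * cfcₙ (auF R n) y) := by
  have hc : Continuous (auF R n) := auF_cont R n
  have h0 : auF R n 0 = 0 := auF_zero R n
  have h1 : cfcₙ (fun t : ℝ => t * auF R n t) y = y * cfcₙ (auF R n) y := by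
    rw [cfcₙ_mul (fun t : ℝ => t) (auF R n) y continuousOn_id rfl hc.continuousOn h0,
      cfcₙ_id' ℝ y hy]
  have h2 : cfcₙ (fun t : ℝ => t - t * auF R n t) y = y - y * cfcₙ (auF R n) y := by
    rw [cfcₙ_sub (fun t : ℝ => t) (fun t : ℝ => t * auF R n t) y continuousOn_id rfl
      ((continuous_id.mul hc).continuousOn) (by simp [h0]), h1, cfcₙ_id' ℝ y hy]
  have h3 : cfcₙ (fun t : ℝ => R⁻¹ * (t - t * auF R n t)) y
      = R⁻¹ • (y - y * cfcₙ (auF R n) y) := by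
    rw [cfcₙ_const_mul R⁻¹ (fun t : ℝ => t - t * auF R n t) y
      ((continuous_id.sub (continuous_id.mul hc)).continuousOn) (by simp [h0]), h2]
  have h4 : auF R (n+1) = fun t => auF R n t + R⁻¹ * (t - t * auF R n t) := rfl
  rw [h4, cfcₙ_add (auF R n) (fun t : ℝ => R⁻¹ * (t - t * auF R n t)) y hc.continuousOn h0
    ((continuous_const.mul (continuous_id.sub (continuous_id.mul hc))).continuousOn)
    (by simp [h0]), h3]

lemma auF_mem (I : TwoSidedIdeal C) (R : ℝ) (n : ℕ) (w x : C) (hy : w * star w ∈ I) (r : ℝ) :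
    r • (cfcₙ (auF R n) (w * star w) * x) ∈ I := by
  induction n generalizing r with
  | zero =>
    have h : cfcₙ (auF R 0) (w * star w) = 0 := by
      rw [show auF R 0 = (fun _ : ℝ => (0:ℝ)) from rfl]
      exact cfcₙ_const_zero ℝ _
    rw [h, zero_mul, smul_zero]
    exact zero_mem I
  | succ n ih =>
    have hysa : IsSelfAdjoint (w * star w) := IsSelfAdjoint.mul_star_self w
    set y := w * star w with hy_def
    set u := cfcₙ (auF R n) y with hu_def
    rw [auF_cfc_succ R n hysa]
    have expand : r • ((u + R⁻¹ • (y - y * u)) * x)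
        = r • (u * x) + ((r * R⁻¹) • (y * x) - (r * R⁻¹) • (y * (u * x))) := by
      simp only [add_mul, smul_add, smul_mul_assoc, sub_mul, smul_sub, smul_smul, mul_assoc]
    have e1 : (r * R⁻¹) • (y * x) = y * ((r * R⁻¹) • x) := (mul_smul_comm _ _ _).symm
    have e2 : (r * R⁻¹) • (y * (u * x)) = y * ((r * R⁻¹) • (u * x)) := (mul_smul_comm _ _ _).symm
    rw [expand, e1, e2]
    exact I.add_mem (ih r)
      (I.sub_mem (I.mul_mem_right _ _ hy) (I.mul_mem_right _ _ hy))

lemma auF_est (w : C) (n : ℕ) :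
    ‖w - cfcₙ (auF (‖w * star w‖ + 1) n) (w * star w) * w‖
      ≤ Real.sqrt ((‖w * star w‖ + 1) / (2 * n + 1)) := by
  set R := ‖w * star w‖ + 1 with hR_def
  set y := w * star w with hy_def
  have hy : IsPos y := isPos_mul_star_self w
  have hR : 0 < R := by positivity
  set u := cfcₙ (auF R n) y with hu_def
  have hu : IsSelfAdjoint u := cfcₙ_predicate _ y
  have hc : Continuous (auF R n) := auF_cont R n
  have h0 : auF R n 0 = 0 := auF_zero R n
  have hstar : star (w - u * w) = star w - star w * u := by
    rw [star_sub, star_mul, hu.star_eq]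
  have hexp : (w - u * w) * star (w - u * w)
      = y - y * u - (u * y - u * (y * u)) := by
    rw [hstar, hy_def]
    noncomm_ring
  have hyu : y * u = cfcₙ (fun t : ℝ => t * auF R n t) y := by
    rw [cfcₙ_mul (fun t : ℝ => t) (auF R n) y continuousOn_id rfl hc.continuousOn h0,
      cfcₙ_id' ℝ y hy.1]
  have huy : u * y = cfcₙ (fun t : ℝ => auF R n t * t) y := by
    rw [cfcₙ_mul (auF R n) (fun t : ℝ => t) y hc.continuousOn h0 continuousOn_id rfl,
      cfcₙ_id' ℝ y hy.1]
  have huyu : u * (y * u) = cfcₙ (fun t : ℝ => auF R n t * (t * auF R n t)) y := by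
    rw [cfcₙ_mul (auF R n) (fun t : ℝ => t * auF R n t) y hc.continuousOn h0
      ((continuous_id.mul hc).continuousOn) (by simp [h0]), ← hyu]
  have hkey : (w - u * w) * star (w - u * w)
      = cfcₙ (fun t : ℝ => t * (1 - auF R n t) ^ 2) y := by
    rw [hexp, huyu, hyu, huy]
    rw [← cfcₙ_sub (fun t : ℝ => auF R n t * t) (fun t : ℝ => auF R n t * (t * auF R n t)) y
      ((hc.mul continuous_id).continuousOn) (by simp [h0])
      ((hc.mul (continuous_id.mul hc)).continuousOn) (by simp [h0])]
    nth_rewrite 1 [← cfcₙ_id' ℝ y hy.1]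
    rw [← cfcₙ_sub (fun t : ℝ => t) (fun t : ℝ => t * auF R n t) y continuousOn_id rfl
      ((continuous_id.mul hc).continuousOn) (by simp [h0])]
    rw [← cfcₙ_sub (fun t : ℝ => t - t * auF R n t)
      (fun t : ℝ => auF R n t * t - auF R n t * (t * auF R n t)) y
      ((continuous_id.sub (continuous_id.mul hc)).continuousOn) (by simp [h0])
      (((hc.mul continuous_id).sub (hc.mul (continuous_id.mul hc))).continuousOn)
      (by simp [h0])]
    exact cfcₙ_congr fun t _ => by ring
  have hbound : ‖cfcₙ (fun t : ℝ => t * (1 - auF R n t) ^ 2) y‖ ≤ R / (2 * n + 1) := by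
    apply norm_cfcₙ_le
    intro t ht
    have ht0 : 0 ≤ t := hy.2 t ht
    have ht1 : t ≤ R := le_trans (hy.le_norm ht) (by rw [hR_def]; linarith)
    have hs0 : 0 ≤ t / R := div_nonneg ht0 hR.le
    have hs1 : t / R ≤ 1 := (div_le_one hR).mpr ht1
    have hR' : R * (t / R) = t := by field_simp
    have hval : t * (1 - auF R n t) ^ 2 = R * ((t / R) * (1 - t / R) ^ (2 * n)) := by
      rw [auF_closed, ← pow_mul, mul_comm n 2, ← mul_assoc, hR']
    have hpw : (0:ℝ) ≤ (1 - t / R) ^ (2 * n) := (even_two_mul n).pow_nonneg _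
    rw [hval, Real.norm_eq_abs, abs_of_nonneg (mul_nonneg hR.le (mul_nonneg hs0 hpw))]
    have haux := aux_s_one_sub_pow_le hs0 hs1 (2 * n)
    push_cast at haux
    calc R * ((t / R) * (1 - t / R) ^ (2 * n)) ≤ R * (1 / (2 * n + 1)) :=
          mul_le_mul_of_nonneg_left haux hR.le
    _ = R / (2 * n + 1) := by ring
  rw [← Real.sqrt_sq (norm_nonneg (w - u * w))]
  apply Real.sqrt_le_sqrt
  calc ‖w - u * w‖ ^ 2 = ‖(w - u * w) * star (w - u * w)‖ := by
        rw [CStarRing.norm_self_mul_star, sq]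
  _ ≤ R / (2 * n + 1) := by rw [hkey]; exact hbound

lemma auF_tendsto (w : C) :
    Tendsto (fun n => cfcₙ (auF (‖w * star w‖ + 1) n) (w * star w) * w) atTop (𝓝 w) := by
  rw [tendsto_iff_norm_sub_tendsto_zero]
  set R := ‖w * star w‖ + 1 with hR_def
  have hR : 0 < R := by positivity
  have h1 : Tendsto (fun n : ℕ => R / (2 * n + 1)) atTop (𝓝 0) := by
    apply squeeze_zero (g := fun n : ℕ => R * (1 / (n + 1))) (fun n => by positivity)
    · intro n
      have hcast : (0:ℝ) ≤ (n:ℝ) := Nat.cast_nonneg n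
      have hle : (n:ℝ) + 1 ≤ 2 * n + 1 := by linarith
      rw [div_eq_mul_one_div]
      exact mul_le_mul_of_nonneg_left (one_div_le_one_div_of_le (by positivity) hle) hR.le
    · simpa using tendsto_one_div_add_atTop_nhds_zero_nat.const_mul R
  apply squeeze_zero (g := fun n : ℕ => Real.sqrt (R / (2 * n + 1)))
    (fun n => norm_nonneg _) (fun n => by rw [norm_sub_rev]; exact auF_est w n)
  exact (Real.continuous_sqrt.tendsto' 0 0 Real.sqrt_zero).comp h1

lemma mem_of_mul_star_mem {I : TwoSidedIdeal C} (hcl : IsClosed (I : Set C)) {w : C}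
    (hw : w * star w ∈ I) : w ∈ I := by
  refine hcl.mem_of_tendsto (auF_tendsto w) (Eventually.of_forall fun n => ?_)
  simpa using auF_mem I (‖w * star w‖ + 1) n w w hw 1

lemma ideal_smul_mem {I : TwoSidedIdeal C} (hcl : IsClosed (I : Set C)) {x : C}
    (hx : x ∈ I) (r : ℝ) : r • x ∈ I := by
  refine hcl.mem_of_tendsto ((auF_tendsto x).const_smul r) (Eventually.of_forall fun n => ?_)
  exact auF_mem I (‖x * star x‖ + 1) n x x (I.mul_mem_right _ _ hx) r

/-! ### The square-root iteration -/

/-- The Newton–Stone–Weierstrass iteration converging to `√t` on `[0,1]`. -/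
noncomputable def sqA : ℕ → ℝ → ℝ
  | 0 => fun _ => 0
  | n + 1 => fun t => sqA n t + 2⁻¹ * (t - sqA n t * sqA n t)

lemma sqA_cont (n : ℕ) : Continuous (sqA n) := by
  induction n with
  | zero => exact continuous_const
  | succ n ih => exact ih.add (continuous_const.mul (continuous_id.sub (ih.mul ih)))

lemma sqA_zero (n : ℕ) : sqA n 0 = 0 := by
  induction n with
  | zero => rfl
  | succ n ih => simp [sqA, ih]

lemma sqA_bounds (n : ℕ) {t : ℝ} (h0 : 0 ≤ t) (h1 : t ≤ 1) :
    0 ≤ sqA n t ∧ sqA n t ≤ Real.sqrt t := by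
  have hst0 : 0 ≤ Real.sqrt t := Real.sqrt_nonneg t
  have hst1 : Real.sqrt t ≤ 1 := Real.sqrt_le_one.mpr h1
  have hsq : Real.sqrt t ^ 2 = t := Real.sq_sqrt h0
  induction n with
  | zero => simpa [sqA] using hst0
  | succ n ih =>
    obtain ⟨ih0, ih1⟩ := ih
    constructor
    · show 0 ≤ sqA n t + 2⁻¹ * (t - sqA n t * sqA n t)
      nlinarith [ih0, ih1, hsq]
    · show sqA n t + 2⁻¹ * (t - sqA n t * sqA n t) ≤ Real.sqrt t
      nlinarith [ih0, ih1, hsq,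
        mul_nonneg (sub_nonneg.2 ih1) (by linarith : (0:ℝ) ≤ 2 - Real.sqrt t - sqA n t)]

lemma sqA_err (n : ℕ) {t : ℝ} (h0 : 0 ≤ t) (h1 : t ≤ 1) :
    (2 + n * Real.sqrt t) * (Real.sqrt t - sqA n t) ≤ 2 * Real.sqrt t := by
  induction n with
  | zero => simp [sqA]
  | succ n ih =>
    obtain ⟨hb0, hb1⟩ := sqA_bounds n h0 h1
    have hsq : Real.sqrt t ^ 2 = t := Real.sq_sqrt h0
    have hst1 : Real.sqrt t ≤ 1 := Real.sqrt_le_one.mpr h1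
    have hst0 : 0 ≤ Real.sqrt t := Real.sqrt_nonneg t
    set st := Real.sqrt t with hst_def
    set bn := sqA n t with hbn_def
    have hrec : st - (sqA (n+1) t) = (st - bn) * (1 - (st + bn) / 2) := by
      show st - (bn + 2⁻¹ * (t - bn * bn)) = _
      linear_combination ((1:ℝ)/2) * hsq
    have e0 : 0 ≤ st - bn := by linarith
    have step1 : (st - bn) * (1 - (st + bn) / 2) ≤ (st - bn) * (1 - st / 2) := by
      apply mul_le_mul_of_nonneg_left _ e0
      linarith
    have step2 : (2 + ((n:ℝ) + 1) * st) * ((st - bn) * (1 - st / 2))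
        ≤ (2 + (n:ℝ) * st) * (st - bn) := by
      nlinarith [mul_nonneg (mul_nonneg (by positivity : (0:ℝ) ≤ (n:ℝ)+1)
        (mul_nonneg hst0 hst0)) e0, mul_nonneg (mul_nonneg hst0 hst0) e0]
    have hnn : (0:ℝ) ≤ 2 + ((n:ℝ) + 1) * st := by positivity
    calc (2 + ((n:ℕ)+1 : ℕ) * st) * (st - sqA (n+1) t)
        = (2 + ((n:ℝ) + 1) * st) * ((st - bn) * (1 - (st + bn) / 2)) := by
          rw [hrec]; push_cast; ring
    _ ≤ (2 + ((n:ℝ) + 1) * st) * ((st - bn) * (1 - st / 2)) :=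
          mul_le_mul_of_nonneg_left step1 hnn
    _ ≤ (2 + (n:ℝ) * st) * (st - bn) := step2
    _ ≤ 2 * st := ih

lemma sqA_err' (n : ℕ) {t : ℝ} (h0 : 0 ≤ t) (h1 : t ≤ 1) :
    Real.sqrt t - sqA n t ≤ 2 / (n + 1) := by
  obtain ⟨hb0, hb1⟩ := sqA_bounds n h0 h1
  have herr := sqA_err n h0 h1
  have hst0 : 0 ≤ Real.sqrt t := Real.sqrt_nonneg t
  have hst1 : Real.sqrt t ≤ 1 := Real.sqrt_le_one.mpr h1
  rw [le_div_iff₀ (by positivity : (0:ℝ) < (n:ℝ) + 1)]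
  rcases eq_or_lt_of_le hst0 with h | h
  · have hbt : Real.sqrt t - sqA n t ≤ 0 := by rw [← h] at hb1 ⊢; linarith
    nlinarith
  · nlinarith [mul_nonneg (sub_nonneg.2 hb1) (by linarith : (0:ℝ) ≤ 2 - Real.sqrt t),
      mul_pos h (by positivity : (0:ℝ) < (n:ℝ) + 1)]

/-- Scaled square root iteration: converges to `√t` on `[0, r0²]`. -/
noncomputable def sqB (r0 : ℝ) (n : ℕ) (t : ℝ) : ℝ := r0 * sqA n (t / r0 ^ 2)

lemma sqB_cont (r0 : ℝ) (n : ℕ) : Continuous (sqB r0 n) :=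
  continuous_const.mul ((sqA_cont n).comp (continuous_id.div_const _))

lemma sqB_zero (r0 : ℝ) (n : ℕ) : sqB r0 n 0 = 0 := by
  simp [sqB, sqA_zero]

lemma sqB_succ (r0 : ℝ) (hr0 : 0 < r0) (n : ℕ) (t : ℝ) :
    sqB r0 (n+1) t = sqB r0 n t + (2 * r0)⁻¹ * (t - sqB r0 n t * sqB r0 n t) := by
  have hne : r0 ≠ 0 := hr0.ne'
  show r0 * (sqA n (t / r0^2) + 2⁻¹ * (t / r0^2 - sqA n (t / r0^2) * sqA n (t / r0^2))) = _
  rw [sqB]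
  field_simp

lemma sqB_cfc_succ (r0 : ℝ) (hr0 : 0 < r0) (n : ℕ) {x : C} (hx : IsSelfAdjoint x) :
    cfcₙ (sqB r0 (n+1)) x
      = cfcₙ (sqB r0 n) x + (2 * r0)⁻¹ • (x - cfcₙ (sqB r0 n) x * cfcₙ (sqB r0 n) x) := by
  have hc : Continuous (sqB r0 n) := sqB_cont r0 n
  have h0 : sqB r0 n 0 = 0 := sqB_zero r0 n
  have h1 : cfcₙ (fun t : ℝ => sqB r0 n t * sqB r0 n t) x
      = cfcₙ (sqB r0 n) x * cfcₙ (sqB r0 n) x :=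
    cfcₙ_mul (sqB r0 n) (sqB r0 n) x hc.continuousOn h0 hc.continuousOn h0
  have h2 : cfcₙ (fun t : ℝ => t - sqB r0 n t * sqB r0 n t) x
      = x - cfcₙ (sqB r0 n) x * cfcₙ (sqB r0 n) x := by
    rw [cfcₙ_sub (fun t : ℝ => t) (fun t : ℝ => sqB r0 n t * sqB r0 n t) x continuousOn_id rfl
      ((hc.mul hc).continuousOn) (by simp [h0]), h1, cfcₙ_id' ℝ x hx]
  have h3 : cfcₙ (fun t : ℝ => (2 * r0)⁻¹ * (t - sqB r0 n t * sqB r0 n t)) x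
      = (2 * r0)⁻¹ • (x - cfcₙ (sqB r0 n) x * cfcₙ (sqB r0 n) x) := by
    rw [cfcₙ_const_mul (2 * r0)⁻¹ (fun t : ℝ => t - sqB r0 n t * sqB r0 n t) x
      ((continuous_id.sub (hc.mul hc)).continuousOn) (by simp [h0]), h2]
  have h4 : cfcₙ (sqB r0 (n+1)) x
      = cfcₙ (fun t => sqB r0 n t + (2 * r0)⁻¹ * (t - sqB r0 n t * sqB r0 n t)) x :=
    cfcₙ_congr fun t _ => sqB_succ r0 hr0 n t
  rw [h4, cfcₙ_add (sqB r0 n) (fun t : ℝ => (2 * r0)⁻¹ * (t - sqB r0 n t * sqB r0 n t)) x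
    hc.continuousOn h0
    ((continuous_const.mul (continuous_id.sub (hc.mul hc))).continuousOn) (by simp [h0]), h3]

lemma sqB_mem {I : TwoSidedIdeal C} (hcl : IsClosed (I : Set C)) (r0 : ℝ) (hr0 : 0 < r0)
    {x x' : C} (hx : IsSelfAdjoint x) (hx' : IsSelfAdjoint x') (hxx' : x - x' ∈ I) (n : ℕ) :
    cfcₙ (sqB r0 n) x - cfcₙ (sqB r0 n) x' ∈ I := by
  induction n with
  | zero =>
    have h : sqB r0 0 = (fun _ : ℝ => (0:ℝ)) := by
      funext t
      show r0 * sqA 0 (t / r0 ^ 2) = 0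
      rw [show sqA 0 (t / r0 ^ 2) = 0 from rfl, mul_zero]
    rw [h, cfcₙ_const_zero, cfcₙ_const_zero, sub_zero]
    exact zero_mem I
  | succ n ih =>
    rw [sqB_cfc_succ r0 hr0 n hx, sqB_cfc_succ r0 hr0 n hx']
    set P := cfcₙ (sqB r0 n) x
    set Q := cfcₙ (sqB r0 n) x'
    have hPQ : P * P - Q * Q = P * (P - Q) + (P - Q) * Q := by noncomm_ring
    have hmem : (x - P * P) - (x' - Q * Q) ∈ I := by
      have heq : (x - P * P) - (x' - Q * Q) = (x - x') - (P * (P - Q) + (P - Q) * Q) := by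
        rw [← hPQ]; abel
      rw [heq]
      exact I.sub_mem hxx' (I.add_mem (I.mul_mem_left _ _ ih) (I.mul_mem_right _ _ ih))
    have heq2 : P + (2 * r0)⁻¹ • (x - P * P) - (Q + (2 * r0)⁻¹ • (x' - Q * Q))
        = (P - Q) + (2 * r0)⁻¹ • ((x - P * P) - (x' - Q * Q)) := by
      simp only [smul_sub]; abel
    rw [heq2]
    exact I.add_mem ih (ideal_smul_mem hcl hmem _)

lemma sqB_est {u : C} (hu : IsPos u) {r0 : ℝ} (hr0 : 0 < r0) (hur : ‖u‖ ≤ r0) (n : ℕ) :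
    ‖u - cfcₙ (sqB r0 n) (u * u)‖ ≤ 2 * r0 / (n + 1) := by
  have hc : Continuous (sqB r0 n) := sqB_cont r0 n
  have h0 : sqB r0 n 0 = 0 := sqB_zero r0 n
  have hsq : u * u = cfcₙ (fun t : ℝ => t * t) u := by
    rw [cfcₙ_mul (fun t : ℝ => t) (fun t : ℝ => t) u continuousOn_id rfl continuousOn_id rfl,
      cfcₙ_id' ℝ u hu.1]
  have hcomp : cfcₙ (sqB r0 n) (u * u) = cfcₙ (fun t : ℝ => sqB r0 n (t * t)) u := by
    rw [hsq, ← cfcₙ_comp (sqB r0 n) (fun t : ℝ => t * t) u hc.continuousOn h0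
      ((continuous_id.mul continuous_id).continuousOn) (by simp) hu.1]
    rfl
  have hdiff : u - cfcₙ (sqB r0 n) (u * u)
      = cfcₙ (fun t : ℝ => t - sqB r0 n (t * t)) u := by
    rw [hcomp, cfcₙ_sub (fun t : ℝ => t) (fun t : ℝ => sqB r0 n (t * t)) u continuousOn_id rfl
      ((hc.comp (continuous_id.mul continuous_id)).continuousOn) (by simp [h0]),
      cfcₙ_id' ℝ u hu.1]
  rw [hdiff]
  apply norm_cfcₙ_le
  intro t ht
  have ht0 : 0 ≤ t := hu.2 t ht
  have ht1 : t ≤ r0 := le_trans (hu.le_norm ht) hur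
  have hs0 : 0 ≤ t * t / r0 ^ 2 := by positivity
  have hs1 : t * t / r0 ^ 2 ≤ 1 := by
    rw [div_le_one (by positivity)]
    nlinarith
  have hsqrt : Real.sqrt (t * t / r0 ^ 2) = t / r0 := by
    rw [show t * t / r0 ^ 2 = (t / r0) ^ 2 by ring, Real.sqrt_sq (by positivity)]
  obtain ⟨hb0, hb1⟩ := sqA_bounds n hs0 hs1
  have herr := sqA_err' n hs0 hs1
  rw [hsqrt] at hb1 herr
  have hr' : r0 * (t / r0) = t := by field_simp
  have hval : t - sqB r0 n (t * t) = r0 * (t / r0 - sqA n (t * t / r0 ^ 2)) := by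
    show t - r0 * sqA n (t * t / r0 ^ 2) = _
    rw [mul_sub, hr']
  rw [Real.norm_eq_abs, hval, abs_of_nonneg (mul_nonneg hr0.le (sub_nonneg.2 hb1))]
  calc r0 * (t / r0 - sqA n (t * t / r0 ^ 2)) ≤ r0 * (2 / (n + 1)) :=
        mul_le_mul_of_nonneg_left herr hr0.le
  _ = 2 * r0 / (n + 1) := by ring

lemma sub_mem_of_sq_sub_sq_mem {I : TwoSidedIdeal C} (hcl : IsClosed (I : Set C))
    {u v : C} (hu : IsPos u) (hv : IsPos v) (h : u * u - v * v ∈ I) : u - v ∈ I := by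
  set r0 : ℝ := max ‖u‖ ‖v‖ + 1 with hr0_def
  have hr0 : 0 < r0 := by positivity
  have hur : ‖u‖ ≤ r0 := by
    have := le_max_left ‖u‖ ‖v‖
    rw [hr0_def]; linarith
  have hvr : ‖v‖ ≤ r0 := by
    have := le_max_right ‖u‖ ‖v‖
    rw [hr0_def]; linarith
  have huu : IsSelfAdjoint (u * u) := by
    rw [isSelfAdjoint_iff, star_mul, hu.1.star_eq]
  have hvv : IsSelfAdjoint (v * v) := by
    rw [isSelfAdjoint_iff, star_mul, hv.1.star_eq]
  have hmem : ∀ n, cfcₙ (sqB r0 n) (u * u) - cfcₙ (sqB r0 n) (v * v) ∈ I :=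
    fun n => sqB_mem hcl r0 hr0 huu hvv h n
  have htend : Tendsto (fun n => cfcₙ (sqB r0 n) (u * u) - cfcₙ (sqB r0 n) (v * v))
      atTop (𝓝 (u - v)) := by
    rw [tendsto_iff_norm_sub_tendsto_zero]
    apply squeeze_zero (fun n => norm_nonneg _) (g := fun n : ℕ => 4 * r0 / (n + 1))
    · intro n
      have h1 := sqB_est hu hr0 hur n
      have h2 := sqB_est hv hr0 hvr n
      calc ‖cfcₙ (sqB r0 n) (u * u) - cfcₙ (sqB r0 n) (v * v) - (u - v)‖
          = ‖(cfcₙ (sqB r0 n) (u * u) - u) - (cfcₙ (sqB r0 n) (v * v) - v)‖ := by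
            congr 1; abel
      _ ≤ ‖cfcₙ (sqB r0 n) (u * u) - u‖ + ‖cfcₙ (sqB r0 n) (v * v) - v‖ := norm_sub_le _ _
      _ = ‖u - cfcₙ (sqB r0 n) (u * u)‖ + ‖v - cfcₙ (sqB r0 n) (v * v)‖ := by
            rw [norm_sub_rev, norm_sub_rev (cfcₙ (sqB r0 n) (v * v))]
      _ ≤ 2 * r0 / (n + 1) + 2 * r0 / (n + 1) := add_le_add h1 h2
      _ = 4 * r0 / (n + 1) := by ring
    · have hfun : (fun n : ℕ => 4 * r0 / (n + 1)) = fun n : ℕ => (4 * r0) * (1 / (n + 1)) := by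
        funext n; ring
      rw [hfun]
      simpa using tendsto_one_div_add_atTop_nhds_zero_nat.const_mul (4 * r0)
  exact hcl.mem_of_tendsto htend (Eventually.of_forall hmem)

lemma isPos_posPart {d : C} (hd : IsSelfAdjoint d) : IsPos (d⁺) := by
  rw [CFC.posPart_def]
  refine ⟨cfcₙ_predicate _ d, fun t ht => ?_⟩
  rw [cfcₙ_map_quasispectrum (·⁺ : ℝ → ℝ) d (by fun_prop) (by simp) hd] at ht
  obtain ⟨s, -, rfl⟩ := ht
  exact posPart_nonneg s

lemma isPos_negPart {d : C} (hd : IsSelfAdjoint d) : IsPos (d⁻) := by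
  rw [CFC.negPart_def]
  refine ⟨cfcₙ_predicate _ d, fun t ht => ?_⟩
  rw [cfcₙ_map_quasispectrum (·⁻ : ℝ → ℝ) d (by fun_prop) (by simp) hd] at ht
  obtain ⟨s, -, rfl⟩ := ht
  exact negPart_nonneg s

lemma posPart_add_negPart_sq {d : C} (hd : IsSelfAdjoint d) :
    (d⁺ + d⁻) * (d⁺ + d⁻) = d * d := by
  have habs : d⁺ + d⁻ = cfcₙ (fun t : ℝ => |t|) d := by
    rw [CFC.posPart_def, CFC.negPart_def,
      ← cfcₙ_add (·⁺ : ℝ → ℝ) (·⁻ : ℝ → ℝ) d (by fun_prop) (by simp) (by fun_prop) (by simp)]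
    exact cfcₙ_congr fun t _ => posPart_add_negPart t
  rw [habs, ← cfcₙ_mul (fun t : ℝ => |t|) (fun t : ℝ => |t|) d (by fun_prop) (by simp)
    (by fun_prop) (by simp)]
  have h2 : cfcₙ (fun t : ℝ => |t| * |t|) d = cfcₙ (fun t : ℝ => t * t) d :=
    cfcₙ_congr fun t _ => abs_mul_abs_self t
  rw [h2, cfcₙ_mul (fun t : ℝ => t) (fun t : ℝ => t) d continuousOn_id rfl continuousOn_id rfl,
    cfcₙ_id' ℝ d hd]

end Aux

/-- Let `φ : C → D` be a c.p.c. order zero map between C*-algebras vanishing on a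
closed two-sided ideal `I` of `C`. Then for positive `c, c' ∈ C` with `c * c' ∈ I`
one has `φ c * φ c' = 0`.  (Equivalently, the induced map `C/I → D` is again
c.p.c. of order zero.) -/
theorem orderZero_mod_ideal
    {C D : Type*} [NonUnitalCStarAlgebra C] [NonUnitalCStarAlgebra D]
    (φ : C →ₗ[ℂ] D) (hcpc : IsCPC φ) (hoz : IsOrderZero φ)
    (I : TwoSidedIdeal C) (hclosed : IsClosed (I : Set C))
    (hvanish : ∀ x ∈ I, φ x = 0) :
    ∀ c c' : C, IsPositive c → IsPositive c' → c * c' ∈ I → φ c * φ c' = 0 := by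
  intro c c' hc hc' hI1
  have hcP : IsPos c := hc.isPos
  have hc'P : IsPos c' := hc'.isPos
  -- `c' * c ∈ I` as well
  have hI2 : c' * c ∈ I := by
    apply mem_of_mul_star_mem hclosed
    have hst : star (c' * c) = c * c' := by
      rw [star_mul, hcP.1.star_eq, hc'P.1.star_eq]
    rw [hst]
    exact I.mul_mem_left _ _ hI1
  -- the positive and negative parts of `d = c - c'`
  set d := c - c' with hd_def
  have hd : IsSelfAdjoint d := hcP.1.sub hc'P.1
  have hab : d⁺ * d⁻ = 0 := CFC.posPart_mul_negPart d
  have haP : IsPos (d⁺) := isPos_posPart hd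
  have hbP : IsPos (d⁻) := isPos_negPart hd
  have hsub : d⁺ - d⁻ = d := CFC.posPart_sub_negPart d hd
  -- `s = c + c'` and `m = d⁺ + d⁻` satisfy `s² - m² ∈ I`, hence `s - m ∈ I`
  set s := c + c' with hs_def
  set m := d⁺ + d⁻ with hm_def
  have hsP : IsPos s := hcP.add hc'P
  have hmP : IsPos m := haP.add hbP
  have hmm : m * m = d * d := posPart_add_negPart_sq hd
  have hss : s * s - m * m ∈ I := by
    rw [hmm]
    have hexp : s * s - d * d = (c * c' + c * c') + (c' * c + c' * c) := by
      rw [hs_def, hd_def]; noncomm_ring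
    rw [hexp]
    exact I.add_mem (I.add_mem hI1 hI1) (I.add_mem hI2 hI2)
  have hsm : s - m ∈ I := sub_mem_of_sq_sub_sq_mem hclosed hsP hmP hss
  have hkey : φ (s - m) = 0 := hvanish _ hsm
  have h2 : c' - d⁻ = c - d⁺ := by
    rw [← sub_eq_zero]
    have habel : c' - d⁻ - (c - d⁺) = (d⁺ - d⁻) - (c - c') := by abel
    rw [habel, hsub, hd_def, sub_self]
  have heq1 : s - m = (c - d⁺) + (c - d⁺) := by
    calc s - m = (c - d⁺) + (c' - d⁻) := by rw [hs_def, hm_def]; abel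
    _ = (c - d⁺) + (c - d⁺) := by rw [h2]
  have heq2 : s - m = (c' - d⁻) + (c' - d⁻) := by rw [heq1, h2]
  have hphic : φ c = φ (d⁺) := by
    have h3 : φ ((c - d⁺) + (c - d⁺)) = 0 := by rw [← heq1]; exact hkey
    rw [map_add, map_sub] at h3
    have h4 : (2:ℂ) • (φ c - φ (d⁺)) = 0 := by
      rw [two_smul]; exact h3
    rcases smul_eq_zero.mp h4 with h | h
    · exact absurd h two_ne_zero
    · exact sub_eq_zero.mp h
  have hphic' : φ c' = φ (d⁻) := by
    have h3 : φ ((c' - d⁻) + (c' - d⁻)) = 0 := by rw [← heq2]; exact hkey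
    rw [map_add, map_sub] at h3
    have h4 : (2:ℂ) • (φ c' - φ (d⁻)) = 0 := by
      rw [two_smul]; exact h3
    rcases smul_eq_zero.mp h4 with h | h
    · exact absurd h two_ne_zero
    · exact sub_eq_zero.mp h
  rw [hphic, hphic']
  exact hoz _ _ haP.isPositive hbP.isPositive hab
end
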